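/- Let a₁, a₂, a₃ be pairwise relatively prime integers (gcd(a₁,a₂) = gcd(a₁,a₃) = gcd(a₂,a₃) = 1) with 1 < a₁ < a₂ < a₃. Then there exists a nonnegative integer b with r(b) = 1 such that every nonnegative integer b′ with r(b′) = 0 satisfies b′ < b; i.e. g₀(a₁,a₂,a₃) < g₁(a₁,a₂,a₃), where g_j denotes the largest nonnegative integer that has exactly j representations. -/
import Mathlib


/-- `r(b)`: the number of representations of `b` as `a₁x₁ + a₂x₂ + a₃x₃` with
`x₁, x₂, x₃` nonnegative integers. -/
noncomputable def numReps3 (a₁ a₂ a₃ b : ℕ) : ℕ :=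
  Set.ncard {x : ℕ × ℕ × ℕ | a₁ * x.1 + a₂ * x.2.1 + a₃ * x.2.2 = b}

/-- Every number above the Frobenius number of a coprime pair is representable. -/
lemma pair_rep {m n : ℕ} (cop : Nat.Coprime m n) (hm : 1 < m) (hn : 1 < n)
    {k : ℕ} (hk : m * n - m - n < k) : ∃ a b : ℕ, m * a + n * b = k := by
  have H := (frobeniusNumber_pair cop hm hn).2
  by_cases hc : k ∈ AddSubmonoid.closure ({m, n} : Set ℕ)
  · rw [AddSubmonoid.mem_closure_pair] at hc
    obtain ⟨a, b, hab⟩ := hc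
    exact ⟨a, b, by rw [mul_comm m a, mul_comm n b]; simpa [smul_eq_mul] using hab⟩
  · exact absurd (H hc) (not_le.mpr hk)

lemma reps_finite (a₁ a₂ a₃ b : ℕ) (h₁ : 0 < a₁) (h₂ : 0 < a₂) (h₃ : 0 < a₃) :
    {x : ℕ × ℕ × ℕ | a₁ * x.1 + a₂ * x.2.1 + a₃ * x.2.2 = b}.Finite := by
  apply Set.Finite.subset (((Set.finite_Iic b).prod
    ((Set.finite_Iic b).prod (Set.finite_Iic b))))
  rintro ⟨x, y, z⟩ h
  simp only [Set.mem_setOf_eq] at h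
  have hx : x ≤ a₁ * x := Nat.le_mul_of_pos_left x h₁
  have hy : y ≤ a₂ * y := Nat.le_mul_of_pos_left y h₂
  have hz : z ≤ a₃ * z := Nat.le_mul_of_pos_left z h₃
  exact ⟨by simp; omega, by simp; omega, by simp; omega⟩

/-- `g₀ < g₁` for pairwise relatively prime `a₁ < a₂ < a₃`: there is
a `b` with exactly one representation exceeding every `b'` with no representation. -/
theorem stmt_14 (a₁ a₂ a₃ : ℕ) (h₁ : 1 < a₁) (h₁₂ : a₁ < a₂) (h₂₃ : a₂ < a₃)
    (h12 : Nat.Coprime a₁ a₂) (h13 : Nat.Coprime a₁ a₃) (h23 : Nat.Coprime a₂ a₃) :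
    ∃ b : ℕ, numReps3 a₁ a₂ a₃ b = 1 ∧
      ∀ b' : ℕ, numReps3 a₁ a₂ a₃ b' = 0 → b' < b := by
  classical
  have h₂ : 1 < a₂ := h₁.trans h₁₂
  have h₃ : 1 < a₃ := h₂.trans h₂₃
  set R : ℕ → Prop := fun b => ∃ x y z : ℕ, a₁ * x + a₂ * y + a₃ * z = b with hRdef
  -- large numbers are representable (with x₁ = 0)
  have hbig : ∀ k, a₂ * a₃ - a₂ - a₃ < k → R k := by
    intro k hk
    obtain ⟨y, z, hyz⟩ := pair_rep h23 h₂ h₃ hk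
    exact ⟨0, y, z, by omega⟩
  have hmn : a₂ + a₃ ≤ a₂ * a₃ := Nat.add_le_mul h₂ h₃
  -- 1 is not representable
  have h1nr : ¬ R 1 := by
    rintro ⟨x, y, z, hxyz⟩
    have hx : 2 * x ≤ a₁ * x := Nat.mul_le_mul_right x h₁
    have hy : 2 * y ≤ a₂ * y := Nat.mul_le_mul_right y h₂
    have hz : 2 * z ≤ a₃ * z := Nat.mul_le_mul_right z h₃
    have hx0 : x = 0 ∧ y = 0 ∧ z = 0 := by omega
    simp [hx0.1, hx0.2.1, hx0.2.2] at hxyz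
  -- the largest non-representable number f
  obtain ⟨f, hfnr, hfmax⟩ : ∃ f, ¬ R f ∧ ∀ k, f < k → R k := by
    refine ⟨Nat.findGreatest (fun n => ¬ R n) (a₂ * a₃),
      Nat.findGreatest_spec (P := fun n => ¬ R n) (m := 1) (n := a₂ * a₃) (by omega) h1nr, ?_⟩
    intro k hk
    by_cases hkb : k ≤ a₂ * a₃
    · by_contra hnr
      exact (Nat.findGreatest_is_greatest hk hkb) hnr
    · exact hbig k (by omega)
  refine ⟨f + a₁, ?_, ?_⟩
  · -- exactly one representation of f + a₁
    -- every representation has x₁ = 0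
    have hx0 : ∀ x y z : ℕ, a₁ * x + a₂ * y + a₃ * z = f + a₁ → x = 0 := by
      intro x y z hxyz
      by_contra hx
      obtain ⟨x', rfl⟩ : ∃ x', x = x' + 1 := ⟨x - 1, by omega⟩
      exact hfnr ⟨x', y, z, by rw [Nat.mul_add] at hxyz; omega⟩
    -- a₂ * a₃ - a₁ is pair-representable
    obtain ⟨u, v, huv⟩ : ∃ u v : ℕ, a₂ * u + a₃ * v = a₂ * a₃ - a₁ :=
      pair_rep h23 h₂ h₃ (by omega)
    have huv' : a₂ * u + a₃ * v + a₁ = a₂ * a₃ := by omega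
    -- no representation has y ≥ a₃
    have hylt : ∀ y z : ℕ, a₂ * y + a₃ * z = f + a₁ → y < a₃ := by
      intro y z hyz
      by_contra hy
      push_neg at hy
      obtain ⟨y', rfl⟩ : ∃ y', y = y' + a₃ := ⟨y - a₃, by omega⟩
      refine hfnr ⟨0, y' + u, z + v, ?_⟩
      have : a₂ * (y' + a₃) = a₂ * y' + a₂ * a₃ := by ring
      have h2 : a₂ * (y' + u) = a₂ * y' + a₂ * u := by ring
      have h3 : a₃ * (z + v) = a₃ * z + a₃ * v := by ring
      omega
    -- existence of a representation
    obtain ⟨x₀, y₀, z₀, hrep⟩ := hfmax (f + a₁) (by omega)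
    have hx₀ : x₀ = 0 := hx0 _ _ _ hrep
    subst hx₀
    have hrep' : a₂ * y₀ + a₃ * z₀ = f + a₁ := by simpa using hrep
    -- two representations with different y are impossible
    have key : ∀ y z y' z' : ℕ, a₂ * y + a₃ * z = f + a₁ →
        a₂ * y' + a₃ * z' = f + a₁ → y < y' → False := by
      intro y z y' z' h h' hlt
      obtain ⟨d, hd, rfl⟩ : ∃ d, 0 < d ∧ y' = y + d := ⟨y' - y, by omega, by omega⟩
      have h'' : a₂ * y + (a₂ * d + a₃ * z') = f + a₁ := by rw [mul_add] at h'; linarith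
      have e1 : a₂ * d + a₃ * z' = a₃ * z := by linarith
      have hzz : z' ≤ z := by
        by_contra hc
        push_neg at hc
        have h5 : a₃ * z < a₃ * z' := (Nat.mul_lt_mul_left (show 0 < a₃ by omega)).mpr hc
        have h6 : 0 < a₂ * d := Nat.mul_pos (by omega) hd
        linarith
      obtain ⟨e, rfl⟩ : ∃ e, z = z' + e := ⟨z - z', by omega⟩
      have e2 : a₂ * d = a₃ * e := by rw [mul_add] at e1; linarith
      have hdvd : a₃ ∣ d :=
        Nat.Coprime.dvd_of_dvd_mul_left h23.symm ⟨e, e2⟩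
      have h7 : a₃ ≤ d := Nat.le_of_dvd hd hdvd
      exact absurd (hylt (y + d) z' h') (by omega)
    -- uniqueness
    have huniq : ∀ y z : ℕ, a₂ * y + a₃ * z = f + a₁ → y = y₀ ∧ z = z₀ := by
      intro y z hyz
      rcases lt_trichotomy y y₀ with hlt | heq | hgt
      · exact absurd (key y z y₀ z₀ hyz hrep' hlt) (by simp)
      · refine ⟨heq, ?_⟩
        subst heq
        have : a₃ * z = a₃ * z₀ := by omega
        exact Nat.eq_of_mul_eq_mul_left (by omega) this
      · exact absurd (key y₀ z₀ y z hrep' hyz hgt) (by simp)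
    have hset : {x : ℕ × ℕ × ℕ | a₁ * x.1 + a₂ * x.2.1 + a₃ * x.2.2 = f + a₁}
        = {((0 : ℕ), y₀, z₀)} := by
      ext ⟨x, y, z⟩
      simp only [Set.mem_setOf_eq, Set.mem_singleton_iff, Prod.mk.injEq]
      constructor
      · intro h
        have hx : x = 0 := hx0 _ _ _ h
        subst hx
        obtain ⟨hy, hz⟩ := huniq y z (by simpa using h)
        exact ⟨rfl, hy, hz⟩
      · rintro ⟨rfl, rfl, rfl⟩
        simpa using hrep'
    rw [numReps3, hset, Set.ncard_singleton]
  · -- every non-representable b' is below f + a₁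
    intro b' hb'
    by_contra hge
    push_neg at hge
    obtain ⟨x, y, z, hxyz⟩ := hfmax b' (by omega)
    have hne : {x : ℕ × ℕ × ℕ | a₁ * x.1 + a₂ * x.2.1 + a₃ * x.2.2 = b'}.Nonempty :=
      ⟨(x, y, z), hxyz⟩
    have hfin := reps_finite a₁ a₂ a₃ b' (by omega) (by omega) (by omega)
    rw [numReps3, Set.ncard_eq_zero hfin] at hb'
    exact Set.not_nonempty_empty (hb' ▸ hne)
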